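/- arXiv:2004.04233 — 2 statements merged into one kernel-verified Lean document; each statement's English description precedes it below -/
import Mathlib

section
/- Lemma (compatibility of the pushed-forward almost-complex structure, the chart version of Lemma 2.15): for every point p = (θ,t,r,s) with |t| < 1/2 and any positive reals ρ₁, ρ₂ > 0, the derivative DF(p) : ℝ⁴ → ℝ⁴ is invertible, and the linear map J := DF(p) ∘ J₀ ∘ DF(p)⁻¹ (where J₀ is determined by J₀ e_θ = −ρ₁ e_t, J₀ e_t = ρ₁⁻¹ e_θ, J₀ e_r = −ρ₂ e_s, J₀ e_s = ρ₂⁻¹ e_r in the source coordinates) is compatible with the standard symplectic form ω on the target ℝ⁴: J ∘ J = −id, ω(Ju, Jv) = ω(u,v) for all u, v, and ω(u, Ju) > 0 for all u ≠ 0. -/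
noncomputable section

/-- The standard symplectic form on the target `ℝ⁴` with coordinates
`(x₁, y₁, x₂, y₂)` (indices `0, 1, 2, 3`): `ω = dx₁ ∧ dy₁ + dx₂ ∧ dy₂`. -/
def omega4 (u v : Fin 4 → ℝ) : ℝ :=
  u 0 * v 1 - u 1 * v 0 + u 2 * v 3 - u 3 * v 2

/-- The map `F(θ,t,r,s) = (f(t) cos θ, f(t) sin θ, s, r)` with
`f(t) = √(C₁² + 2t)`, in source coordinates `(θ, t, r, s)`. -/
def Fmap (C₁ : ℝ) (p : Fin 4 → ℝ) : Fin 4 → ℝ :=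
  ![Real.sqrt (C₁ ^ 2 + 2 * p 1) * Real.cos (p 0),
    Real.sqrt (C₁ ^ 2 + 2 * p 1) * Real.sin (p 0),
    p 3, p 2]

/-- The linear map `J₀` in the source coordinates `(θ, t, r, s)`, determined by
`J₀ e_θ = −ρ₁ e_t`, `J₀ e_t = ρ₁⁻¹ e_θ`, `J₀ e_r = −ρ₂ e_s`, `J₀ e_s = ρ₂⁻¹ e_r`. -/
def J0 (ρ₁ ρ₂ : ℝ) (u : Fin 4 → ℝ) : Fin 4 → ℝ :=
  ![ρ₁⁻¹ * u 1, -(ρ₁ * u 0), ρ₂⁻¹ * u 3, -(ρ₂ * u 2)]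

/-! Write `a = f(t)`. Then `DF(p)` maps `e_θ ↦ a (−sin θ, cos θ, 0, 0)`,
`e_t ↦ a⁻¹ (cos θ, sin θ, 0, 0)`, `e_r ↦ e_{y₂}`, `e_s ↦ e_{x₂}`; because `f f' = 1` it pulls `ω`
back to `−ω₀`, `ω₀ = dθ ∧ dt + dr ∧ ds`. `J₀` is compatible with `−ω₀`, since
`−ω₀(u, J₀ u) = ρ₁ u_θ² + ρ₁⁻¹ u_t² + ρ₂ u_r² + ρ₂⁻¹ u_s²`. That positivity already forces `DF(p)`
to be injective, hence invertible, and compatibility is transported along `DF(p)` to `J`. -/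

def IsCompatible {E : Type*} [AddCommGroup E] (ω : E → E → ℝ) (J : E → E) : Prop :=
  (∀ u, J (J u) = -u) ∧ (∀ u v, ω (J u) (J v) = ω u v) ∧ ∀ u, u ≠ 0 → 0 < ω u (J u)

namespace IsCompatible

variable {E F G : Type*} [AddCommGroup E] [AddCommGroup F]
  [FunLike G E F] [AddMonoidHomClass G E F]
  {σ : E → E → ℝ} {J₀ : E → E} {ω : F → F → ℝ} {J : F → F} {L : G}

theorem injective_of_pullback (h : IsCompatible σ J₀) (hω : ∀ w, ω 0 w = 0)
    (hL : ∀ x y, ω (L x) (L y) = σ x y) : Function.Injective L := by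
  refine (injective_iff_map_eq_zero L).mpr fun x hx => ?_
  by_contra hx0
  have := h.2.2 x hx0
  rw [← hL, hx, hω] at this
  exact this.false

theorem of_pullback (h : IsCompatible σ J₀) (hLbij : Function.Bijective L)
    (hL : ∀ x y, ω (L x) (L y) = σ x y) (hJ : ∀ x, J (L x) = L (J₀ x)) :
    IsCompatible ω J := by
  obtain ⟨hsq, hinv, hpos⟩ := h
  refine ⟨fun u => ?_, fun u v => ?_, fun u hu => ?_⟩
  · obtain ⟨x, rfl⟩ := hLbij.2 u
    rw [hJ, hJ, hsq, map_neg]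
  · obtain ⟨x, rfl⟩ := hLbij.2 u
    obtain ⟨y, rfl⟩ := hLbij.2 v
    rw [hJ, hJ, hL, hL, hinv]
  · obtain ⟨x, rfl⟩ := hLbij.2 u
    rw [hJ, hL]
    exact hpos x (by rintro rfl; exact hu (map_zero L))

end IsCompatible

theorem J0_isCompatible {ρ₁ ρ₂ : ℝ} (hρ₁ : 0 < ρ₁) (hρ₂ : 0 < ρ₂) :
    IsCompatible (fun x y => -omega4 x y) (J0 ρ₁ ρ₂) := by
  refine ⟨fun u => ?_, fun u v => ?_, fun u hu => ?_⟩
  · funext i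
    fin_cases i <;> simp [J0, hρ₁.ne', hρ₂.ne']
  · simp only [omega4, J0, Matrix.cons_val]
    field_simp
    ring
  · have hsum : -omega4 u (J0 ρ₁ ρ₂ u) =
        ρ₁ * u 0 ^ 2 + ρ₁⁻¹ * u 1 ^ 2 + ρ₂ * u 2 ^ 2 + ρ₂⁻¹ * u 3 ^ 2 := by
      simp only [omega4, J0, Matrix.cons_val]
      ring
    obtain ⟨i, hi⟩ := Function.ne_iff.mp hu
    show 0 < -omega4 u (J0 ρ₁ ρ₂ u)
    rw [hsum]
    fin_cases i <;> simp only [Pi.zero_apply] at hi <;> positivity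

open ContinuousLinearMap in
def DFmap (a θ : ℝ) : (Fin 4 → ℝ) →L[ℝ] (Fin 4 → ℝ) :=
  pi ![(-(a * Real.sin θ)) • proj 0 + (a⁻¹ * Real.cos θ) • proj 1,
    (a * Real.cos θ) • proj 0 + (a⁻¹ * Real.sin θ) • proj 1, proj 3, proj 2]

theorem DFmap_apply (a θ : ℝ) (v : Fin 4 → ℝ) :
    DFmap a θ v = ![-(a * Real.sin θ) * v 0 + a⁻¹ * Real.cos θ * v 1,
      a * Real.cos θ * v 0 + a⁻¹ * Real.sin θ * v 1, v 3, v 2] := by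
  funext i
  fin_cases i <;> simp [DFmap]

theorem hasFDerivAt_Fmap (C₁ : ℝ) (p : Fin 4 → ℝ) (hp : 0 < C₁ ^ 2 + 2 * p 1) :
    HasFDerivAt (Fmap C₁) (DFmap (Real.sqrt (C₁ ^ 2 + 2 * p 1)) (p 0)) p := by
  have hf := (((hasFDerivAt_apply (𝕜 := ℝ) 1 p).const_mul 2).const_add (C₁ ^ 2)).sqrt hp.ne'
  have hcos := (Real.hasDerivAt_cos (p 0)).comp_hasFDerivAt p (hasFDerivAt_apply (𝕜 := ℝ) 0 p)
  have hsin := (Real.hasDerivAt_sin (p 0)).comp_hasFDerivAt p (hasFDerivAt_apply (𝕜 := ℝ) 0 p)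
  have hs : Real.sqrt (C₁ ^ 2 + 2 * p 1) ≠ 0 := (Real.sqrt_pos.mpr hp).ne'
  refine hasFDerivAt_pi'' fun i => ?_
  fin_cases i
  · refine (hf.mul hcos).congr_fderiv ?_
    ext v
    simp only [add_apply, smul_apply, ContinuousLinearMap.comp_apply,
      ContinuousLinearMap.proj_apply, DFmap_apply, smul_eq_mul, Function.comp_apply,
      Fin.zero_eta, Matrix.cons_val_zero]
    field_simp
  · refine (hf.mul hsin).congr_fderiv ?_
    ext v
    simp only [add_apply, smul_apply, ContinuousLinearMap.comp_apply,
      ContinuousLinearMap.proj_apply, DFmap_apply, smul_eq_mul, Function.comp_apply,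
      Fin.mk_one, Matrix.cons_val_zero, Matrix.cons_val_one]
    field_simp
  · exact hasFDerivAt_apply 3 p
  · exact hasFDerivAt_apply 2 p

theorem omega4_DFmap (a θ : ℝ) (ha : a ≠ 0) (x y : Fin 4 → ℝ) :
    omega4 (DFmap a θ x) (DFmap a θ y) = -omega4 x y := by
  simp only [omega4, DFmap_apply, Matrix.cons_val]
  field_simp
  linear_combination (x 1 * y 0 - x 0 * y 1) * a ^ 2 * Real.sin_sq_add_cos_sq θ

/-- Chart version of Lemma 2.15: `DF(p)` is invertible, and the pushed-forward
almost-complex structure `J = DF(p) ∘ J₀ ∘ DF(p)⁻¹` (characterized by the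
intertwining relation `J ∘ DF(p) = DF(p) ∘ J₀`) is compatible with the standard
symplectic form `ω` on the target. -/
theorem pushforward_compatible (C₁ : ℝ) (hC : 100 < C₁)
    (ρ₁ ρ₂ : ℝ) (hρ₁ : 0 < ρ₁) (hρ₂ : 0 < ρ₂)
    (p : Fin 4 → ℝ) (ht : |p 1| < 1 / 2) :
    Function.Bijective (fderiv ℝ (Fmap C₁) p) ∧
    ∀ J : (Fin 4 → ℝ) → (Fin 4 → ℝ), IsLinearMap ℝ J →
      (∀ v : Fin 4 → ℝ,
        J (fderiv ℝ (Fmap C₁) p v) = fderiv ℝ (Fmap C₁) p (J0 ρ₁ ρ₂ v)) →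
      (∀ u : Fin 4 → ℝ, J (J u) = -u) ∧
      (∀ u v : Fin 4 → ℝ, omega4 (J u) (J v) = omega4 u v) ∧
      (∀ u : Fin 4 → ℝ, u ≠ 0 → 0 < omega4 u (J u)) := by
  have hp : 0 < C₁ ^ 2 + 2 * p 1 := by nlinarith [abs_lt.mp ht]
  rw [(hasFDerivAt_Fmap C₁ p hp).fderiv]
  set L := DFmap (Real.sqrt (C₁ ^ 2 + 2 * p 1)) (p 0)
  have hL : ∀ x y, omega4 (L x) (L y) = -omega4 x y :=
    omega4_DFmap _ _ (Real.sqrt_pos.mpr hp).ne'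
  have hJ0 := J0_isCompatible hρ₁ hρ₂
  have hinj : Function.Injective L :=
    hJ0.injective_of_pullback (fun w => by simp [omega4]) hL
  have hbij : Function.Bijective L :=
    ⟨hinj, LinearMap.injective_iff_surjective.mp hinj⟩
  exact ⟨hbij, fun J _ hJ => hJ0.of_pullback hbij hL hJ⟩
end
end

section
/- Lemma (the symplectic suspension Θ is a symplectic embedding; Lemma 3.4 of the paper): let H : ℝ × ℝ² → ℝ and φ : ℝ × ℝ² → ℝ² be smooth maps such that φ(0,·) = id and, for all t ∈ ℝ and q ∈ ℝ², ∂_t φ(t,q) = ( −∂₂H(t, φ(t,q)), ∂₁H(t, φ(t,q)) ) (i.e. φ(t,·) is the Hamiltonian flow of H(t,·) on (ℝ², dx∧dy), where ∂₁, ∂₂ are the partial derivatives of H(t,·) in its two spatial variables). Fix c ∈ ℝ and define Θ : ℝ⁴ → ℝ⁴ by Θ(x₁,y₁,x₂,y₂) = ( φ¹(x₂−c, (x₁,y₁)), φ²(x₂−c, (x₁,y₁)), x₂, y₂ + H(x₂−c, φ(x₂−c,(x₁,y₁))) ), where φ = (φ¹,φ²). Then for every p ∈ ℝ⁴ and all u,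 v ∈ ℝ⁴, ω(DΘ(p)u, DΘ(p)v) = ω(u,v); moreover, if φ(t,·) is injective for every t, then Θ is injective, so Θ is a symplectic embedding. -/
noncomputable section

/-- The symplectic suspension
`Θ(x₁,y₁,x₂,y₂) = (φ(x₂−c,(x₁,y₁)), x₂, y₂ + H(x₂−c, φ(x₂−c,(x₁,y₁))))`. -/
def suspension (H : ℝ → ℝ × ℝ → ℝ) (φ : ℝ → ℝ × ℝ → ℝ × ℝ) (c : ℝ)
    (p : Fin 4 → ℝ) : Fin 4 → ℝ :=
  ![(φ (p 2 - c) (p 0, p 1)).1,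
    (φ (p 2 - c) (p 0, p 1)).2,
    p 2,
    p 3 + H (p 2 - c) (φ (p 2 - c) (p 0, p 1))]




section Aux
variable {F' : Type*} [NormedAddCommGroup F'] [NormedSpace ℝ F']

theorem aux_left (f : ℝ × (ℝ × ℝ) → F') (hf : Differentiable ℝ f) (t : ℝ) (q : ℝ × ℝ) :
    HasDerivAt (fun s => f (s, q)) (fderiv ℝ f (t, q) (1, 0)) t := by
  have h1 : HasDerivAt (fun s : ℝ => (s, q)) ((1 : ℝ), (0 : ℝ × ℝ)) t :=
    (hasDerivAt_id t).prodMk (hasDerivAt_const t q)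
  exact (hf (t, q)).hasFDerivAt.comp_hasDerivAt t h1

theorem aux_right (f : ℝ × (ℝ × ℝ) → F') (hf : Differentiable ℝ f) (t : ℝ) (q : ℝ × ℝ) :
    HasFDerivAt (fun q' => f (t, q'))
      ((fderiv ℝ f (t, q)).comp (ContinuousLinearMap.inr ℝ ℝ (ℝ × ℝ))) q :=
  (hf (t, q)).hasFDerivAt.comp q (hasFDerivAt_prodMk_right t q)

theorem hasDerivAt_fst' {f : ℝ → F' × F'} {f' : F' × F'} {t : ℝ} (h : HasDerivAt f f' t) :
    HasDerivAt (fun s => (f s).1) f'.1 t := by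
  simpa [Function.comp_def] using ((ContinuousLinearMap.fst ℝ F' F').hasFDerivAt (x := f t)).comp_hasDerivAt t h

theorem hasDerivAt_snd' {f : ℝ → F' × F'} {f' : F' × F'} {t : ℝ} (h : HasDerivAt f f' t) :
    HasDerivAt (fun s => (f s).2) f'.2 t := by
  simpa [Function.comp_def] using ((ContinuousLinearMap.snd ℝ F' F').hasFDerivAt (x := f t)).comp_hasDerivAt t h

end Aux

theorem key_flow (H : ℝ → ℝ × ℝ → ℝ) (φ : ℝ → ℝ × ℝ → ℝ × ℝ)
    (hH : ContDiff ℝ (⊤ : ℕ∞) (fun z : ℝ × (ℝ × ℝ) => H z.1 z.2))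
    (hφ : ContDiff ℝ (⊤ : ℕ∞) (fun z : ℝ × (ℝ × ℝ) => φ z.1 z.2))
    (hflow : ∀ (t : ℝ) (q : ℝ × ℝ), HasDerivAt (fun s => φ s q)
      (-(fderiv ℝ (H t) (φ t q) (0, 1)), fderiv ℝ (H t) (φ t q) (1, 0)) t)
    (t : ℝ) (q : ℝ × ℝ) :
    fderiv ℝ (fun z : ℝ × (ℝ × ℝ) => φ z.1 z.2) (t, q) ((1 : ℝ), (0 : ℝ × ℝ))
      = (-(fderiv ℝ (fun z : ℝ × (ℝ × ℝ) => H z.1 z.2) (t, φ t q) (0, (0, 1))),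
          fderiv ℝ (fun z : ℝ × (ℝ × ℝ) => H z.1 z.2) (t, φ t q) (0, (1, 0))) := by
  have h1 := aux_left _ (hφ.differentiable (by simp)) t q
  have h2 := (hflow t q).unique h1
  have h3 : fderiv ℝ (H t) (φ t q)
      = (fderiv ℝ (fun z : ℝ × (ℝ × ℝ) => H z.1 z.2) (t, φ t q)).comp
          (ContinuousLinearMap.inr ℝ ℝ (ℝ × ℝ)) :=
    (aux_right _ (hH.differentiable (by simp)) t (φ t q)).fderiv
  rw [← h2, h3]
  rfl

theorem liouville (H : ℝ → ℝ × ℝ → ℝ) (φ : ℝ → ℝ × ℝ → ℝ × ℝ)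
    (hH : ContDiff ℝ (⊤ : ℕ∞) (fun z : ℝ × (ℝ × ℝ) => H z.1 z.2))
    (hφ : ContDiff ℝ (⊤ : ℕ∞) (fun z : ℝ × (ℝ × ℝ) => φ z.1 z.2))
    (hφ0 : φ 0 = id)
    (hflow : ∀ (t : ℝ) (q : ℝ × ℝ), HasDerivAt (fun s => φ s q)
      (-(fderiv ℝ (H t) (φ t q) (0, 1)), fderiv ℝ (H t) (φ t q) (1, 0)) t)
    (t : ℝ) (q : ℝ × ℝ) :
    (fderiv ℝ (fun z : ℝ × (ℝ × ℝ) => φ z.1 z.2) (t, q) (0, (1, 0))).1 *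
      (fderiv ℝ (fun z : ℝ × (ℝ × ℝ) => φ z.1 z.2) (t, q) (0, (0, 1))).2
    - (fderiv ℝ (fun z : ℝ × (ℝ × ℝ) => φ z.1 z.2) (t, q) (0, (1, 0))).2 *
      (fderiv ℝ (fun z : ℝ × (ℝ × ℝ) => φ z.1 z.2) (t, q) (0, (0, 1))).1 = 1 := by
  set Φ : ℝ × (ℝ × ℝ) → ℝ × ℝ := fun z => φ z.1 z.2 with hΦdef
  set Hc : ℝ × (ℝ × ℝ) → ℝ := fun z => H z.1 z.2 with hHcdef
  have hΦd : Differentiable ℝ Φ := hφ.differentiable (by simp)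
  have hHcd : Differentiable ℝ Hc := hH.differentiable (by simp)
  have hΦ'd : Differentiable ℝ (fderiv ℝ Φ) :=
    (hφ.fderiv_right (WithTop.coe_le_coe.mpr le_top : (1:WithTop ℕ∞) + 1 ≤ ((⊤ : ℕ∞) : WithTop ℕ∞))).differentiable one_ne_zero
  have hHc'd : Differentiable ℝ (fderiv ℝ Hc) :=
    (hH.fderiv_right (WithTop.coe_le_coe.mpr le_top : (1:WithTop ℕ∞) + 1 ≤ ((⊤ : ℕ∞) : WithTop ℕ∞))).differentiable one_ne_zero
  -- symmetry of second derivatives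
  have hsymΦ : ∀ (z v w : ℝ × (ℝ × ℝ)),
      fderiv ℝ (fderiv ℝ Φ) z v w = fderiv ℝ (fderiv ℝ Φ) z w v := fun z v w =>
    second_derivative_symmetric (fun y => (hΦd y).hasFDerivAt) ((hΦ'd z).hasFDerivAt) v w
  have hsymHc : ∀ (z v w : ℝ × (ℝ × ℝ)),
      fderiv ℝ (fderiv ℝ Hc) z v w = fderiv ℝ (fderiv ℝ Hc) z w v := fun z v w =>
    second_derivative_symmetric (fun y => (hHcd y).hasFDerivAt) ((hHc'd z).hasFDerivAt) v w
  -- the time-derivative of the flow, as a function of z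
  have hX : (fun z : ℝ × (ℝ × ℝ) => fderiv ℝ Φ z ((1:ℝ), (0 : ℝ × ℝ)))
      = fun z => (-(fderiv ℝ Hc (z.1, Φ z) (0, (0, 1))), fderiv ℝ Hc (z.1, Φ z) (0, (1, 0))) := by
    funext z
    exact key_flow H φ hH hφ hflow z.1 z.2
  -- second-derivative in mixed directions, computed via the Hamiltonian
  have main : ∀ (s : ℝ) (w : ℝ × ℝ), HasDerivAt (fun r => fderiv ℝ Φ (r, q) (0, w))
      ( (-(fderiv ℝ (fderiv ℝ Hc) (s, Φ (s, q)) (0, fderiv ℝ Φ (s, q) (0, w)) (0, (0, 1))),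
          fderiv ℝ (fderiv ℝ Hc) (s, Φ (s, q)) (0, fderiv ℝ Φ (s, q) (0, w)) (0, (1, 0))) ) s := by
    intro s w
    have hA : HasDerivAt (fun r => fderiv ℝ Φ (r, q) (0, w))
        (fderiv ℝ (fderiv ℝ Φ) (s, q) ((1:ℝ), (0 : ℝ × ℝ)) (0, w)) s := by
      simpa using (aux_left (fderiv ℝ Φ) hΦ'd s q).clm_apply
        (hasDerivAt_const s ((0 : ℝ), w))
    rw [hsymΦ (s, q) ((1:ℝ), (0:ℝ×ℝ)) (0, w)] at hA
    -- identify fderiv (fderiv Φ) (s,q) (0,w) (1,0) with the derivative of the X field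
    have hS : HasFDerivAt (fun z => fderiv ℝ Φ z ((1:ℝ), (0:ℝ×ℝ)))
        ((fderiv ℝ (fderiv ℝ Φ) (s, q)).flip ((1:ℝ), (0:ℝ×ℝ))) (s, q) := by
      have h := ((hΦ'd (s, q)).hasFDerivAt).clm_apply
        (hasFDerivAt_const ((1:ℝ), (0:ℝ×ℝ)) (s, q))
      simpa using h
    have hι : HasFDerivAt (fun z : ℝ × (ℝ × ℝ) => (z.1, Φ z))
        ((ContinuousLinearMap.fst ℝ ℝ (ℝ × ℝ)).prod (fderiv ℝ Φ (s, q))) (s, q) :=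
      (hasFDerivAt_fst).prodMk (hΦd (s, q)).hasFDerivAt
    have hW : HasFDerivAt (fun z : ℝ × (ℝ × ℝ) => fderiv ℝ Hc (z.1, Φ z))
        ((fderiv ℝ (fderiv ℝ Hc) (s, Φ (s, q))).comp
          ((ContinuousLinearMap.fst ℝ ℝ (ℝ × ℝ)).prod (fderiv ℝ Φ (s, q)))) (s, q) :=
      (hHc'd (s, Φ (s, q))).hasFDerivAt.comp (s, q) hι
    have hW1 := (hW.clm_apply (hasFDerivAt_const ((0:ℝ), ((0:ℝ), (1:ℝ))) (s, q)))
    have hW2 := (hW.clm_apply (hasFDerivAt_const ((0:ℝ), ((1:ℝ), (0:ℝ))) (s, q)))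
    have hRHS : HasFDerivAt (fun z : ℝ × (ℝ × ℝ) =>
          ((-(fderiv ℝ Hc (z.1, Φ z) (0, (0, 1))), fderiv ℝ Hc (z.1, Φ z) (0, (1, 0))) : ℝ × ℝ))
        ((-((fderiv ℝ (fderiv ℝ Hc) (s, Φ (s, q))).comp
            ((ContinuousLinearMap.fst ℝ ℝ (ℝ × ℝ)).prod (fderiv ℝ Φ (s, q)))).flip
              ((0:ℝ), ((0:ℝ), (1:ℝ)))).prod
          (((fderiv ℝ (fderiv ℝ Hc) (s, Φ (s, q))).comp
            ((ContinuousLinearMap.fst ℝ ℝ (ℝ × ℝ)).prod (fderiv ℝ Φ (s, q)))).flip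
              ((0:ℝ), ((1:ℝ), (0:ℝ))))) (s, q) := by
      refine HasFDerivAt.prodMk ?_ ?_
      · exact (hW1.neg).congr_fderiv (by ext <;> simp)
      · simpa using hW2
    rw [← hX] at hRHS
    have heq : fderiv ℝ (fderiv ℝ Φ) (s, q) ((0:ℝ), w) ((1:ℝ), (0:ℝ×ℝ))
        = (-(fderiv ℝ (fderiv ℝ Hc) (s, Φ (s, q)) (0, fderiv ℝ Φ (s, q) (0, w)) (0, (0, 1))),
            fderiv ℝ (fderiv ℝ Hc) (s, Φ (s, q)) (0, fderiv ℝ Φ (s, q) (0, w)) (0, (1, 0))) := by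
      have := hS.unique hRHS
      have h2 := congrArg (fun (T : (ℝ × (ℝ × ℝ)) →L[ℝ] (ℝ × ℝ)) => T ((0:ℝ), w)) this
      simpa using h2
    rw [heq] at hA
    exact hA
  
  -- the determinant function J
  set J : ℝ → ℝ := fun r => (fderiv ℝ Φ (r, q) (0, (1, 0))).1 * (fderiv ℝ Φ (r, q) (0, (0, 1))).2
      - (fderiv ℝ Φ (r, q) (0, (1, 0))).2 * (fderiv ℝ Φ (r, q) (0, (0, 1))).1 with hJdef
  have hJ : ∀ s : ℝ, HasDerivAt J 0 s := by
    intro s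
    have hαd := main s ((1:ℝ), (0:ℝ))
    have hβd := main s ((0:ℝ), (1:ℝ))
    have hd := ((hasDerivAt_fst' hαd).mul (hasDerivAt_snd' hβd)).sub
      ((hasDerivAt_snd' hαd).mul (hasDerivAt_fst' hβd))
    have expand : ∀ (a : ℝ × ℝ) (vv : ℝ × (ℝ × ℝ)),
        fderiv ℝ (fderiv ℝ Hc) (s, Φ (s, q)) ((0:ℝ), a) vv
          = a.1 * fderiv ℝ (fderiv ℝ Hc) (s, Φ (s, q)) ((0:ℝ), ((1:ℝ), (0:ℝ))) vv
            + a.2 * fderiv ℝ (fderiv ℝ Hc) (s, Φ (s, q)) ((0:ℝ), ((0:ℝ), (1:ℝ))) vv := by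
      intro a vv
      have h : ((0:ℝ), a) = a.1 • ((0:ℝ), ((1:ℝ), (0:ℝ))) + a.2 • ((0:ℝ), ((0:ℝ), (1:ℝ))) := by
        simp [Prod.ext_iff]
      rw [h]
      simp only [map_add, map_smul, ContinuousLinearMap.add_apply,
        ContinuousLinearMap.smul_apply, smul_eq_mul]
    have hsym : fderiv ℝ (fderiv ℝ Hc) (s, Φ (s, q)) ((0:ℝ), ((1:ℝ), (0:ℝ))) ((0:ℝ), ((0:ℝ), (1:ℝ)))
        = fderiv ℝ (fderiv ℝ Hc) (s, Φ (s, q)) ((0:ℝ), ((0:ℝ), (1:ℝ))) ((0:ℝ), ((1:ℝ), (0:ℝ))) :=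
      hsymHc _ _ _
    refine hd.congr_deriv (Eq.symm ?_)
    rw [expand (fderiv ℝ Φ (s, q) (0, (1, 0))) ((0:ℝ), ((0:ℝ), (1:ℝ))),
        expand (fderiv ℝ Φ (s, q) (0, (1, 0))) ((0:ℝ), ((1:ℝ), (0:ℝ))),
        expand (fderiv ℝ Φ (s, q) (0, (0, 1))) ((0:ℝ), ((1:ℝ), (0:ℝ))),
        expand (fderiv ℝ Φ (s, q) (0, (0, 1))) ((0:ℝ), ((0:ℝ), (1:ℝ)))]
    linear_combination ((fderiv ℝ Φ (s, q) (0, (1, 0))).1 * (fderiv ℝ Φ (s, q) (0, (0, 1))).2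
      - (fderiv ℝ Φ (s, q) (0, (1, 0))).2 * (fderiv ℝ Φ (s, q) (0, (0, 1))).1) * hsym
  have hconst : J t = J 0 :=
    is_const_of_deriv_eq_zero (fun x => (hJ x).differentiableAt) (fun x => (hJ x).deriv) t 0
  have h0 : ∀ w : ℝ × ℝ, fderiv ℝ Φ (0, q) ((0:ℝ), w) = w := by
    intro w
    have h1 : fderiv ℝ (fun q' => Φ ((0:ℝ), q')) q
        = (fderiv ℝ Φ (0, q)).comp (ContinuousLinearMap.inr ℝ ℝ (ℝ × ℝ)) :=
      (aux_right Φ hΦd 0 q).fderiv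
    have h2 : (fun q' : ℝ × ℝ => Φ ((0:ℝ), q')) = fun q' => q' := by
      funext q'
      simp [hΦdef, hφ0]
    rw [h2] at h1
    have h3 := congrArg (fun (T : (ℝ × ℝ) →L[ℝ] ℝ × ℝ) => T w) h1
    simpa [fderiv_id'] using h3.symm
  have hJ0 : J 0 = 1 := by
    rw [hJdef]
    simp only [h0 ((1:ℝ), (0:ℝ)), h0 ((0:ℝ), (1:ℝ))]
    norm_num
  show J t = 1
  rw [hconst, hJ0]


/-- Lemma 3.4: the symplectic suspension `Θ` of the Hamiltonian flow `φ` of a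
time-dependent Hamiltonian `H` on `(ℝ², dx ∧ dy)` preserves `ω`; if moreover
each time-`t` flow map is injective, then `Θ` is injective, hence a symplectic
embedding. -/
theorem suspension_symplectic_embedding
    (H : ℝ → ℝ × ℝ → ℝ) (φ : ℝ → ℝ × ℝ → ℝ × ℝ)
    (hH : ContDiff ℝ (⊤ : ℕ∞) (fun z : ℝ × (ℝ × ℝ) => H z.1 z.2))
    (hφ : ContDiff ℝ (⊤ : ℕ∞) (fun z : ℝ × (ℝ × ℝ) => φ z.1 z.2))
    (hφ0 : φ 0 = id)
    -- `φ(t,·)` is the Hamiltonian flow of `H(t,·)` on `(ℝ², dx ∧ dy)`: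
    -- `∂_t φ(t,q) = (−∂₂H(t, φ(t,q)), ∂₁H(t, φ(t,q)))`
    (hflow : ∀ (t : ℝ) (q : ℝ × ℝ), HasDerivAt (fun s => φ s q)
      (-(fderiv ℝ (H t) (φ t q) (0, 1)), fderiv ℝ (H t) (φ t q) (1, 0)) t)
    (c : ℝ) :
    (∀ p u v : Fin 4 → ℝ,
      omega4 (fderiv ℝ (suspension H φ c) p u) (fderiv ℝ (suspension H φ c) p v)
        = omega4 u v) ∧
    ((∀ t : ℝ, Function.Injective (φ t)) →
      Function.Injective (suspension H φ c)) := by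
  have hΦd : Differentiable ℝ (fun z : ℝ × (ℝ × ℝ) => φ z.1 z.2) := hφ.differentiable (by simp)
  have hHcd : Differentiable ℝ (fun z : ℝ × (ℝ × ℝ) => H z.1 z.2) := hH.differentiable (by simp)
  constructor
  · intro p u v
    set t : ℝ := p 2 - c with ht
    set q : ℝ × ℝ := (p 0, p 1) with hq
    set F : (ℝ × (ℝ × ℝ)) →L[ℝ] ℝ × ℝ :=
      fderiv ℝ (fun z : ℝ × (ℝ × ℝ) => φ z.1 z.2) (t, q) with hF
    set G : (ℝ × (ℝ × ℝ)) →L[ℝ] ℝ :=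
      fderiv ℝ (fun z : ℝ × (ℝ × ℝ) => H z.1 z.2) (t, φ t q) with hG
    set L : (Fin 4 → ℝ) →L[ℝ] ℝ × (ℝ × ℝ) :=
      (ContinuousLinearMap.proj 2).prod
        ((ContinuousLinearMap.proj 0).prod (ContinuousLinearMap.proj 1)) with hL
    have hg : HasFDerivAt (fun p : Fin 4 → ℝ => ((p 2 - c, (p 0, p 1)) : ℝ × (ℝ × ℝ))) L p :=
      ((hasFDerivAt_apply 2 p).sub_const c).prodMk
        ((hasFDerivAt_apply 0 p).prodMk (hasFDerivAt_apply 1 p))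
    have hΦg : HasFDerivAt (fun p : Fin 4 → ℝ => φ (p 2 - c) (p 0, p 1)) (F.comp L) p :=
      by have h := (hΦd (t, q)).hasFDerivAt.comp p hg; exact h
    have hK : HasFDerivAt (fun z : ℝ × (ℝ × ℝ) => H z.1 (φ z.1 z.2))
        (G.comp ((ContinuousLinearMap.fst ℝ ℝ (ℝ × ℝ)).prod F)) (t, q) :=
      by have h := (hHcd (t, φ t q)).hasFDerivAt.comp (t, q)
            ((hasFDerivAt_fst).prodMk (hΦd (t, q)).hasFDerivAt); exact h
    have hs3 : HasFDerivAt (fun p : Fin 4 → ℝ => p 3 + H (p 2 - c) (φ (p 2 - c) (p 0, p 1)))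
        (ContinuousLinearMap.proj 3 +
          (G.comp ((ContinuousLinearMap.fst ℝ ℝ (ℝ × ℝ)).prod F)).comp L) p :=
      by have h := (hasFDerivAt_apply 3 p).add (hK.comp p hg); exact h
    set D : Fin 4 → ((Fin 4 → ℝ) →L[ℝ] ℝ) :=
      ![(ContinuousLinearMap.fst ℝ ℝ ℝ).comp (F.comp L),
        (ContinuousLinearMap.snd ℝ ℝ ℝ).comp (F.comp L),
        ContinuousLinearMap.proj 2,
        ContinuousLinearMap.proj 3 +
          (G.comp ((ContinuousLinearMap.fst ℝ ℝ (ℝ × ℝ)).prod F)).comp L] with hDdef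
    have hD : HasFDerivAt (suspension H φ c) (ContinuousLinearMap.pi D) p := by
      rw [hasFDerivAt_pi']
      intro i
      rw [ContinuousLinearMap.proj_pi]
      fin_cases i
      · exact hΦg.fst
      · exact hΦg.snd
      · exact hasFDerivAt_apply 2 p
      · exact hs3
    rw [hD.fderiv]
    -- scalar abbreviations
    set a1 : ℝ := (F (0, (1, 0))).1 with ha1
    set a2 : ℝ := (F (0, (1, 0))).2 with ha2
    set b1 : ℝ := (F (0, (0, 1))).1 with hb1
    set b2 : ℝ := (F (0, (0, 1))).2 with hb2
    set Hx : ℝ := G (0, (1, 0)) with hHx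
    set Hy : ℝ := G (0, (0, 1)) with hHy
    set Ht : ℝ := G ((1 : ℝ), (0 : ℝ × ℝ)) with hHt
    have hcF : F ((1 : ℝ), (0 : ℝ × ℝ)) = (-Hy, Hx) := key_flow H φ hH hφ hflow t q
    have hFL : ∀ w : Fin 4 → ℝ, F (L w) = (w 0 * a1 + w 1 * b1 + w 2 * (-Hy),
        w 0 * a2 + w 1 * b2 + w 2 * Hx) := by
      intro w
      have h1 : L w = w 0 • ((0:ℝ), ((1:ℝ), (0:ℝ))) + w 1 • ((0:ℝ), ((0:ℝ), (1:ℝ)))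
          + w 2 • ((1:ℝ), (0 : ℝ × ℝ)) := by
        simp [hL, Prod.ext_iff]
      rw [h1]
      simp only [map_add, map_smul]
      rw [hcF]
      simp [Prod.ext_iff, ha1, ha2, hb1, hb2]
    have hGL : ∀ w : Fin 4 → ℝ, G (w 2, F (L w)) =
        (w 0 * a1 + w 1 * b1 + w 2 * (-Hy)) * Hx
          + (w 0 * a2 + w 1 * b2 + w 2 * Hx) * Hy + w 2 * Ht := by
      intro w
      rw [hFL w]
      have h1 : ((w 2 : ℝ), ((w 0 * a1 + w 1 * b1 + w 2 * (-Hy) : ℝ),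
          (w 0 * a2 + w 1 * b2 + w 2 * Hx : ℝ))) =
          (w 0 * a1 + w 1 * b1 + w 2 * (-Hy)) • ((0:ℝ), ((1:ℝ), (0:ℝ)))
            + (w 0 * a2 + w 1 * b2 + w 2 * Hx) • ((0:ℝ), ((0:ℝ), (1:ℝ)))
            + w 2 • ((1:ℝ), (0 : ℝ × ℝ)) := by
        simp [Prod.ext_iff]
      rw [h1]
      simp only [map_add, map_smul, smul_eq_mul]
      rfl
    have hJ : a1 * b2 - a2 * b1 = 1 := liouville H φ hH hφ hφ0 hflow t q
    simp only [omega4, ContinuousLinearMap.pi_apply, hDdef,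
      Matrix.cons_val_zero, Matrix.cons_val_one, Matrix.head_cons,
      Matrix.cons_val_two, Matrix.tail_cons, Matrix.cons_val_three,
      ContinuousLinearMap.comp_apply, ContinuousLinearMap.coe_fst',
      ContinuousLinearMap.coe_snd', ContinuousLinearMap.add_apply,
      ContinuousLinearMap.proj_apply, ContinuousLinearMap.prod_apply]
    have hL1 : ∀ w : Fin 4 → ℝ, (L w).1 = w 2 := fun w => rfl
    rw [hL1 u, hL1 v, hGL u, hGL v, hFL u, hFL v]
    simp only
    linear_combination (u 0 * v 1 - u 1 * v 0) * hJ
  · intro hinj p p' h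
    have h2 : p 2 = p' 2 := by
      have := congrFun h 2
      simpa [suspension] using this
    have h01 : φ (p 2 - c) (p 0, p 1) = φ (p 2 - c) (p' 0, p' 1) := by
      have h0 := congrFun h 0
      have h1 := congrFun h 1
      simp only [suspension, Matrix.cons_val_zero, Matrix.cons_val_one, Matrix.head_cons] at h0 h1
      rw [← h2] at h0 h1
      exact Prod.ext h0 h1
    have hq : (p 0, p 1) = (p' 0, p' 1) := hinj (p 2 - c) h01
    have h3 : p 3 = p' 3 := by
      have := congrFun h 3
      simp only [suspension, Matrix.cons_val_three, Matrix.tail_cons, Matrix.head_cons,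
        Matrix.cons_val_zero] at this
      rw [← h2, ← hq] at this
      exact add_right_cancel this
    funext i
    fin_cases i
    · exact congrArg Prod.fst hq
    · exact congrArg Prod.snd hq
    · exact h2
    · exact h3
end
end
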